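/- For every i ∈ F_q there exist bijections f: G → G and h: G → G such that for all g, g₀ ∈ G: g·g₀⁻¹ ∈ X_0 if and only if f(g)·h(g₀)⁻¹ ∈ X_i. Consequently, the incidence structures dev(X_0) and dev(X_i), whose point sets are G and whose blocks are the right translates X_0·g (respectively X_i·g) for g ∈ G, are isomorphic. -/

import Mathlib

/-!
Write `D_j(g) = g.z - γ_j(g.x, g.y)`, so that `X_j = {D_j = 0}`, and put `d = 1 - 16εi²`, which is
nonzero because `ε` is a nonsquare. Let `φ` keep `(x, y)` and replace `D_0` by `d·D_0`, and let `ℓ`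
apply `L = [[1, -4iε], [-4i, 1]]` to `(x, y)` while keeping `D_0`; both are injective, hence
bijective. With `f = φ ∘ ℓ` and `h(g₀) = φ(g₀⁻¹)⁻¹` one computes
`D_i(f(g)·h(g₀)⁻¹) = d·D_0(g·g₀⁻¹)`, and the statement about blocks follows formally.
-/

/-- The Heisenberg group `H₃(F)` of upper unitriangular 3×3 matrices over `F`,
recorded by the three free entries: `x` in position (1,2), `y` in position (2,3),
`z` in position (1,3). -/
@[ext]
structure Heis (F : Type*) where
  x : F
  y : F
  z : F
deriving DecidableEq

namespace Heis

variable {F : Type*} [Field F]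

/-- Multiplication corresponding to the matrix product. -/
instance : Group (Heis F) where
  mul a b := ⟨a.x + b.x, a.y + b.y, a.z + b.z + a.x * b.y⟩
  one := ⟨0, 0, 0⟩
  inv a := ⟨-a.x, -a.y, -a.z + a.x * a.y⟩
  mul_assoc a b c := Heis.ext
    (show a.x + b.x + c.x = a.x + (b.x + c.x) by ring)
    (show a.y + b.y + c.y = a.y + (b.y + c.y) by ring)
    (show a.z + b.z + a.x * b.y + c.z + (a.x + b.x) * c.y
        = a.z + (b.z + c.z + b.x * c.y) + a.x * (b.y + c.y) by ring)
  one_mul a := Heis.ext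
    (show (0 : F) + a.x = a.x by ring)
    (show (0 : F) + a.y = a.y by ring)
    (show (0 : F) + a.z + 0 * a.y = a.z by ring)
  mul_one a := Heis.ext
    (show a.x + 0 = a.x by ring)
    (show a.y + 0 = a.y by ring)
    (show a.z + 0 + a.x * 0 = a.z by ring)
  inv_mul_cancel a := Heis.ext
    (show -a.x + a.x = 0 by ring)
    (show -a.y + a.y = 0 by ring)
    (show -a.z + a.x * a.y + a.z + -a.x * a.y = 0 by ring)

instance [Fintype F] : Fintype (Heis F) :=
  Fintype.ofEquiv (F × F × F)
    ⟨fun p => ⟨p.1, p.2.1, p.2.2⟩, fun a => (a.x, a.y, a.z), fun _ => rfl, fun _ => rfl⟩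

end Heis

/-- The element `g(x,y,z)` of the Heisenberg group. -/
def gElt {F : Type*} (x y z : F) : Heis F := ⟨x, y, z⟩

/-- The center `Z = {g(0,0,z) : z ∈ F}` of the Heisenberg group, as a set. -/
def Zset (F : Type*) [Field F] : Set (Heis F) := {g : Heis F | g.x = 0 ∧ g.y = 0}

/-- The center `Z` as a subgroup of the Heisenberg group. -/
def Zsub (F : Type*) [Field F] : Subgroup (Heis F) where
  carrier := Zset F
  mul_mem' := fun {a b} ha hb =>
    ⟨show a.x + b.x = 0 by rw [ha.1, hb.1, add_zero],
     show a.y + b.y = 0 by rw [ha.2, hb.2, add_zero]⟩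
  one_mem' := ⟨rfl, rfl⟩
  inv_mem' := fun {a} ha =>
    ⟨show -a.x = 0 by rw [ha.1, neg_zero],
     show -a.y = 0 by rw [ha.2, neg_zero]⟩

/-- `γ_i(α,β) = αβ/2 + (α² − εβ²)i`. -/
def gam {F : Type*} [Field F] (ε i α β : F) : F := α * β / 2 + (α ^ 2 - ε * β ^ 2) * i

/-- `Y_i = {g(α, β, γ_i(α,β)) : (α,β) ≠ (0,0)}`. -/
def Yset {F : Type*} [Field F] (ε i : F) : Set (Heis F) :=
  {g : Heis F | ∃ α β : F, (α, β) ≠ (0, 0) ∧ g = gElt α β (gam ε i α β)}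

/-- `X_i = Y_i ∪ {e}`. -/
def Xset {F : Type*} [Field F] (ε i : F) : Set (Heis F) := Yset ε i ∪ {1}

/-- The map `ρ(M) : G → G` attached to the matrix `M = [[α,β],[εβ,α]]`. -/
def rho {F : Type*} [Field F] (ε α β : F) : Heis F → Heis F := fun g =>
  gElt (α * g.x + ε * β * g.y) (β * g.x + α * g.y)
    (α * β * (g.x ^ 2 / 2 + ε * g.y ^ 2 / 2) + ε * β ^ 2 * g.x * g.y
      + (α ^ 2 - ε * β ^ 2) * g.z)

/-- `K = {ρ(M) : M = [[α,β],[εβ,α]], (α,β) ≠ (0,0)}`, as a set of maps `G → G`. -/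
def Kset {F : Type*} [Field F] (ε : F) : Set (Heis F → Heis F) :=
  {f | ∃ α β : F, (α, β) ≠ (0, 0) ∧ f = rho ε α β}

/-- The family of sets `{e}`, `Z \ {e}`, `Y_i` for `i ∈ F`. -/
def SFam {F : Type*} [Field F] (ε : F) : Set (Set (Heis F)) :=
  insert {1} (insert (Zset F \ {1}) {S | ∃ i : F, S = Yset ε i})

/-- `f` preserves each of the basic sets `{e}`, `Z \ {e}`, `Y_i`:
`hg⁻¹ ∈ S ↔ f(h)f(g)⁻¹ ∈ S`. -/
def Preserves {F : Type*} [Field F] (ε : F) (f : Heis F → Heis F) : Prop :=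
  ∀ S ∈ SFam ε, ∀ g h : Heis F, h * g⁻¹ ∈ S ↔ f h * (f g)⁻¹ ∈ S

/-- The set of permutations of `G` of the form `x ↦ σ(x)·c` with `σ ∈ K`, `c ∈ G`. -/
def Aset {F : Type*} [Field F] (ε : F) : Set (Equiv.Perm (Heis F)) :=
  {f | ∃ σ ∈ Kset ε, ∃ c : Heis F, ∀ x : Heis F, f x = σ x * c}

/-- The operation `ψ` on `F ∪ {∞}`, with `∞` encoded as `none`. -/
def psi {F : Type*} [Field F] [DecidableEq F] (ε : F) : Option F → Option F → Option F
  | none, j => j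
  | some i, none => some i
  | some i, some j => if i + j = 0 then none else some ((i * j + ε / 16) / (i + j))

/-- `Y_k` for `k ∈ F ∪ {∞}`, where `Y_∞ = Z \ {e}`. -/
def YInf {F : Type*} [Field F] (ε : F) : Option F → Set (Heis F)
  | some i => Yset ε i
  | none => Zset F \ {1}

namespace Heis

variable {F : Type*} [Field F]

@[simp] lemma one_x : (1 : Heis F).x = 0 := rfl
@[simp] lemma one_y : (1 : Heis F).y = 0 := rfl
@[simp] lemma one_z : (1 : Heis F).z = 0 := rfl
@[simp] lemma mul_x (a b : Heis F) : (a * b).x = a.x + b.x := rfl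
@[simp] lemma mul_y (a b : Heis F) : (a * b).y = a.y + b.y := rfl
@[simp] lemma mul_z (a b : Heis F) : (a * b).z = a.z + b.z + a.x * b.y := rfl

def defect (ε j : F) (g : Heis F) : F := g.z - gam ε j g.x g.y

lemma mem_Xset_iff_defect_eq_zero (ε j : F) (g : Heis F) :
    g ∈ Xset ε j ↔ defect ε j g = 0 := by
  rw [defect, sub_eq_zero]
  constructor
  · rintro (⟨α, β, -, rfl⟩ | rfl)
    · rfl
    · simp [gam]
  · intro hz
    by_cases h0 : (g.x, g.y) = (0, 0)
    · obtain ⟨hx, hy⟩ := Prod.mk.inj h0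
      right
      ext
      · exact hx
      · exact hy
      · simp [hz, hx, hy, gam]
    · exact Or.inl ⟨g.x, g.y, h0, Heis.ext rfl rfl hz⟩

def scaleDefect (ε i : F) (g : Heis F) : Heis F :=
  ⟨g.x, g.y, (1 - ε * (4 * i) ^ 2) * defect ε 0 g + gam ε i g.x g.y⟩

def planeMap (ε i : F) (g : Heis F) : Heis F :=
  ⟨g.x - 4 * i * ε * g.y, -(4 * i) * g.x + g.y,
    defect ε 0 g + gam ε 0 (g.x - 4 * i * ε * g.y) (-(4 * i) * g.x + g.y)⟩

variable {ε : F} (i : F)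

lemma scaleDefect_injective (hd : 1 - ε * (4 * i) ^ 2 ≠ 0) :
    Function.Injective (scaleDefect ε i) := by
  intro g g' h
  obtain ⟨hx, hy, hz⟩ := Heis.mk.inj h
  have : defect ε 0 g = defect ε 0 g' := by
    rw [hx, hy] at hz
    exact mul_left_cancel₀ hd (add_right_cancel hz)
  ext
  · exact hx
  · exact hy
  · simpa [defect, hx, hy] using this

lemma planeMap_injective (hd : 1 - ε * (4 * i) ^ 2 ≠ 0) :
    Function.Injective (planeMap ε i) := by
  intro g g' h
  obtain ⟨hx, hy, hz⟩ := Heis.mk.inj h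
  have hx' : g.x = g'.x := by
    refine sub_eq_zero.mp ((mul_eq_zero.mp ?_).resolve_left hd)
    linear_combination hx + 4 * i * ε * hy
  have hy' : g.y = g'.y := by linear_combination hy + 4 * i * hx'
  ext
  · exact hx'
  · exact hy'
  · simpa [defect, hx', hy'] using hz

/-- As `D_0(g·u) = D_0 g + D_0 u + ω(v, v')/2` with `ω(v, v') = xy' - yx'`, this reduces to
`ω(Lv, v')/2 - 2i·B(Lv, v') = det L · ω(v, v')/2` for the polar form `B(v, v') = xx' - εyy'` of
`α² - εβ²`, which is what `L` is chosen for. -/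
lemma defect_scaleDefect_planeMap_mul_scaleDefect (h2 : (2 : F) ≠ 0) (g u : Heis F) :
    defect ε i (scaleDefect ε i (planeMap ε i g) * scaleDefect ε i u) =
      (1 - ε * (4 * i) ^ 2) * defect ε 0 (g * u) := by
  simp only [defect, scaleDefect, planeMap, gam, mul_x, mul_y, mul_z]
  field_simp
  ring

end Heis

lemma one_sub_mul_sq_ne_zero_of_not_isSquare {F : Type*} [Field F] {ε : F}
    (hε : ¬IsSquare ε) (c : F) : 1 - ε * c ^ 2 ≠ 0 := by
  intro h
  have hc : c ≠ 0 := by rintro rfl; simp at h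
  exact hε ⟨c⁻¹, by field_simp; linear_combination -h⟩

lemma FiniteField.two_ne_zero_of_odd_card {F : Type*} [Field F] [Fintype F]
    (hodd : Odd (Fintype.card F)) : (2 : F) ≠ 0 :=
  Ring.two_ne_zero fun hch =>
    Nat.not_even_iff_odd.mpr hodd (Nat.even_iff.mpr (FiniteField.even_card_of_char_two hch))

lemma image_image_mul_right_eq_of_mul_inv_mem_iff {G : Type*} [Group G] {S T : Set G}
    {f h : G → G} (hf : Function.Surjective f)
    (hST : ∀ g g0 : G, g * g0⁻¹ ∈ S ↔ f g * (h g0)⁻¹ ∈ T) (g0 : G) :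
    f '' ((fun u => u * g0) '' S) = (fun u => u * h g0) '' T := by
  ext u
  simp only [Set.mem_image]
  constructor
  · rintro ⟨w, ⟨v, hv, rfl⟩, rfl⟩
    exact ⟨f (v * g0) * (h g0)⁻¹, (hST (v * g0) g0).1 (by simpa using hv), by simp⟩
  · rintro ⟨w, hw, rfl⟩
    obtain ⟨v, hv⟩ := hf (w * h g0)
    refine ⟨v, ⟨v * g0⁻¹, ?_, by simp⟩, hv⟩
    exact (hST v g0).2 (by rw [hv]; simpa using hw)

open Heis in
/-- For every `i ∈ F_q` there exist bijections `f, h : G → G` such that for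
all `g, g₀ ∈ G`: `g·g₀⁻¹ ∈ X₀ ↔ f(g)·h(g₀)⁻¹ ∈ X_i`. Consequently, the incidence
structures `dev(X₀)` and `dev(X_i)`, whose point sets are `G` and whose blocks are the
right translates `X₀·g` (respectively `X_i·g`) for `g ∈ G`, are isomorphic: `f` maps the
block `X₀·g₀` onto the block `X_i·h(g₀)`. -/
theorem statement_19 {F : Type*} [Field F] [Fintype F]
    (hodd : Odd (Fintype.card F)) (ε : F) (hε : ¬IsSquare ε) (i : F) :
    ∃ f h : Heis F → Heis F, Function.Bijective f ∧ Function.Bijective h ∧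
      (∀ g g0 : Heis F, g * g0⁻¹ ∈ Xset ε 0 ↔ f g * (h g0)⁻¹ ∈ Xset ε i) ∧
      (∀ g0 : Heis F,
        f '' ((fun u => u * g0) '' Xset ε 0) = (fun u => u * h g0) '' Xset ε i) := by
  have hd := one_sub_mul_sq_ne_zero_of_not_isSquare hε (4 * i)
  have hscale := (scaleDefect_injective i hd).bijective_of_finite
  let f := scaleDefect ε i ∘ planeMap ε i
  let h := fun g0 : Heis F => (scaleDefect ε i g0⁻¹)⁻¹
  have hf : Function.Bijective f := hscale.comp (planeMap_injective i hd).bijective_of_finite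
  have hh : Function.Bijective h := inv_bijective.comp (hscale.comp inv_bijective)
  have hX : ∀ g g0 : Heis F, g * g0⁻¹ ∈ Xset ε 0 ↔ f g * (h g0)⁻¹ ∈ Xset ε i := by
    intro g g0
    simp only [f, h, Function.comp_apply, inv_inv, mem_Xset_iff_defect_eq_zero,
      defect_scaleDefect_planeMap_mul_scaleDefect i (FiniteField.two_ne_zero_of_odd_card hodd),
      mul_eq_zero, hd, false_or]
  exact ⟨f, h, hf, hh, hX, image_image_mul_right_eq_of_mul_inv_mem_iff hf.2 hX⟩
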